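/- arXiv:2304.01303 — 3 statements merged into one kernel-verified Lean document; each statement's English description precedes it below -/
import Mathlib

section
/- There is an absolute constant C > 0 with the following property. Let L ≥ 1 and m ≥ 1 be integers and fix k* ∈ {1,…,m}. For every ordered pair (τ, τ̃) of states in {1,…,m}^{L+1}, the number of triples (λ, i, k) with λ ∈ {1,…,m}^{L+1}, i ∈ {0,…,L}, k ∈ {1,…,m} such that (τ, τ̃) occurs as a consecutive pair of distinct states on the path γ_{λ,i,k} is at most C · m² · (L+1)^{1 + log₂ 3}. -/
/-!
Swap(0,i) composes to the transposition (0 i), so the path γ_{λ,i,k} consists of λ, the scan of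
Swap(0,i) from λ[0 ↦ k*], the scan of Swap(0,i) from ν = (λ[0 ↦ k*] ∘ (0 i))[0 ↦ k], and the
endpoint λ[i ↦ k][0 ↦ λ₀]. Every transposition is a bijection of states, and on each segment a
state together with two coordinates, (λ₀, k), (λ₀, λᵢ) or (λᵢ, k), determines (λ, k). Hence for a
fixed i each of the 2|Swap(0,i)| + 4 positions of the path carries τ for at most m² pairs (λ, k),
and the recursion T(n) ≤ 3 T(⌈n/2⌉) gives |Swap(0,i)| ≤ 3^⌈log₂(L+1)⌉ ≤ 3 (L+1)^{log₂ 3}.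
-/

/-- The recursively defined sequence `Swap(i,j)` of transpositions of coordinate indices:
if `j − i ≤ 1` it is the single transposition `(i,j)`; otherwise, with `h = ⌊(i+j)/2⌋`,
it is `Swap(i,h) ++ Swap(h,j) ++ Swap(i,h)`. -/
def swapSeq (i j : ℕ) : List (ℕ × ℕ) :=
  if j ≤ i + 1 then [(i, j)]
  else swapSeq i ((i + j) / 2) ++ swapSeq ((i + j) / 2) j ++ swapSeq i ((i + j) / 2)
termination_by j - i
decreasing_by all_goals omega

/-- `Swap(0, i)`, with no moves if `i = 0`. -/
def swapSeq0 (i : ℕ) : List (ℕ × ℕ) := if i = 0 then [] else swapSeq 0 i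

/-- Applying a transposition `(a, b)` of coordinate indices to a state: the coordinates
`a` and `b` are exchanged. -/
def applyT {L m : ℕ} (σ : Fin (L + 1) → Fin m) (t : ℕ × ℕ) : Fin (L + 1) → Fin m :=
  if h : t.1 < L + 1 ∧ t.2 < L + 1 then σ ∘ Equiv.swap ⟨t.1, h.1⟩ ⟨t.2, h.2⟩ else σ

/-- The path `γ_{λ,i,k}`: the sequence of states visited by successively
(1) setting coordinate 0 to `k*`; (2) applying the transpositions of `Swap(0,i)` in order;
(3) setting coordinate 0 to `k`; (4) applying `Swap(0,i)` again; (5) setting coordinate 0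
back to `λ₀`.  It starts at `λ` and ends at `λ_{[i,k]}`. -/
def gammaPath {L m : ℕ} (lam : Fin (L + 1) → Fin m) (i : ℕ) (k kstar : Fin m) :
    List (Fin (L + 1) → Fin m) :=
  List.scanl (fun σ mv => mv σ) lam
    ([fun σ : Fin (L + 1) → Fin m => Function.update σ 0 kstar] ++
      (swapSeq0 i).map (fun t (σ : Fin (L + 1) → Fin m) => applyT σ t) ++
      [fun σ : Fin (L + 1) → Fin m => Function.update σ 0 k] ++
      (swapSeq0 i).map (fun t (σ : Fin (L + 1) → Fin m) => applyT σ t) ++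
      [fun σ : Fin (L + 1) → Fin m => Function.update σ 0 (lam 0)])

open Finset Function

theorem List.foldl_injective {α β : Type*} {f : β → α → β} (hf : ∀ a, Injective (f · a))
    (l : List α) : Injective (l.foldl f) := by
  induction l with
  | nil => exact injective_id
  | cons a l ih => exact ih.comp (hf a)

theorem Finset.card_filter_eq_le_of_injective {X Y Z : Type*} [Fintype X] [Fintype Z]
    [DecidableEq Y] (g : X → Y) (r : X → Z) (hgr : Injective fun x => (g x, r x)) (y : Y) :
    #{x | g x = y} ≤ Fintype.card Z :=
  card_le_card_of_injOn r (fun _ _ => mem_coe.2 (mem_univ _)) fun _ hx _ hx' h =>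
    hgr (Prod.ext ((mem_filter.1 hx).2.trans (mem_filter.1 hx').2.symm) h)

theorem Finset.card_filter_mem_scanl_le {X Z α β : Type*} [Fintype X] [Fintype Z]
    [DecidableEq X] [DecidableEq β] {f : β → α → β} (hf : ∀ a, Injective (f · a)) (l : List α)
    (g : X → β) (r : X → Z) (hgr : Injective fun x => (g x, r x)) (y : β) :
    #{x | y ∈ List.scanl f (g x) l} ≤ (l.length + 1) * Fintype.card Z := by
  have hsub : ({x | y ∈ List.scanl f (g x) l} : Finset X) ⊆
      (range (l.length + 1)).biUnion fun j => {x | (l.take j).foldl f (g x) = y} := by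
    intro x hx
    obtain ⟨j, hj, rfl⟩ := List.mem_iff_getElem.1 (mem_filter.1 hx).2
    simp only [List.length_scanl] at hj
    simpa using ⟨j, by omega, rfl⟩
  calc _ ≤ _ := card_le_card hsub
    _ ≤ ∑ j ∈ range (l.length + 1), #{x | (l.take j).foldl f (g x) = y} := card_biUnion_le
    _ ≤ ∑ _j ∈ range (l.length + 1), Fintype.card Z := by
      refine sum_le_sum fun j _ => card_filter_eq_le_of_injective _ r ?_ y
      intro x x' h
      simp only [Prod.mk.injEq] at h
      exact hgr (Prod.ext (List.foldl_injective hf _ h.1) h.2)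
    _ = _ := by simp

theorem update_swap_update_swap {ι α : Type*} [DecidableEq ι] (f : ι → α) (a b : ι)
    (c d e : α) :
    update (update (update f a c ∘ Equiv.swap a b) a d ∘ Equiv.swap a b) a e =
      update (update f b d) a e := by
  funext x
  by_cases hxa : x = a
  · simp [hxa]
  by_cases hxb : x = b
  · subst hxb
    simp [update_apply]
  · simp [hxa, hxb, Equiv.swap_apply_of_ne_of_ne]

theorem Nat.two_pow_clog_le {n : ℕ} (hn : 1 ≤ n) : 2 ^ Nat.clog 2 n ≤ 2 * n := by
  rcases Nat.eq_zero_or_pos (Nat.clog 2 n) with hc | hc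
  · rw [hc]
    omega
  · have := (Nat.lt_clog_iff_pow_lt (b := 2) one_lt_two).1 (Nat.sub_one_lt hc.ne')
    rw [← Nat.sub_one_add_one hc.ne', pow_succ]
    omega

theorem three_pow_clog_two_le {n : ℕ} (hn : 1 ≤ n) :
    (3 : ℝ) ^ Nat.clog 2 n ≤ 3 * (n : ℝ) ^ Real.logb 2 3 := by
  have hlog : 0 ≤ Real.logb 2 3 := Real.logb_nonneg one_lt_two (by norm_num)
  calc (3 : ℝ) ^ Nat.clog 2 n = ((2 : ℝ) ^ Nat.clog 2 n) ^ Real.logb 2 3 := by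
        rw [← Real.rpow_natCast_mul zero_le_two, mul_comm, Real.rpow_mul_natCast zero_le_two,
          Real.rpow_logb two_pos (by norm_num) three_pos]
    _ ≤ (2 * n : ℝ) ^ Real.logb 2 3 :=
        Real.rpow_le_rpow (by positivity) (by exact_mod_cast Nat.two_pow_clog_le hn) hlog
    _ = 3 * (n : ℝ) ^ Real.logb 2 3 := by
        rw [Real.mul_rpow zero_le_two n.cast_nonneg,
          Real.rpow_logb two_pos (by norm_num) three_pos]

theorem Finset.card_filter_prod_prod_eq_sum {α β γ : Type*} [Fintype α] [Fintype β] [Fintype γ]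
    (P : α → β → γ → Prop) [∀ a b c, Decidable (P a b c)] :
    #{x : α × β × γ | P x.1 x.2.1 x.2.2} = ∑ b, #{y : α × γ | P y.1 b y.2} := by
  simp only [card_filter, Fintype.sum_prod_type]
  exact sum_comm

theorem length_swapSeq_le (i j : ℕ) : (swapSeq i j).length ≤ 3 ^ Nat.clog 2 (j - i) := by
  rw [swapSeq]
  split_ifs with hji
  · exact Nat.one_le_pow _ _ (by norm_num)
  · have hclog : Nat.clog 2 (j - i) = Nat.clog 2 ((j - i + 1) / 2) + 1 :=
      Nat.clog_of_two_le (by norm_num) (by omega)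
    have hleft : (swapSeq i ((i + j) / 2)).length ≤ 3 ^ Nat.clog 2 ((j - i + 1) / 2) :=
      (length_swapSeq_le _ _).trans
        (Nat.pow_le_pow_right (by norm_num) (Nat.clog_mono_right _ (by omega)))
    have hright : (swapSeq ((i + j) / 2) j).length ≤ 3 ^ Nat.clog 2 ((j - i + 1) / 2) :=
      (length_swapSeq_le _ _).trans_eq (by congr 2; omega)
    simp only [List.length_append, hclog, pow_succ]
    omega
termination_by j - i
decreasing_by all_goals omega

theorem length_swapSeq0_le (i : ℕ) : (swapSeq0 i).length ≤ 3 ^ Nat.clog 2 i := by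
  unfold swapSeq0
  split_ifs
  · simp
  · simpa using length_swapSeq_le 0 i

section GammaPath

variable {L m : ℕ}

theorem applyT_injective (t : ℕ × ℕ) :
    Injective fun σ : Fin (L + 1) → Fin m => applyT σ t := by
  intro σ σ' h
  unfold applyT at h
  split_ifs at h
  · exact (Equiv.surjective _).injective_comp_right h
  · exact h

theorem foldl_applyT_swapSeq {i j : ℕ} (hij : i < j) (hj : j < L + 1)
    (σ : Fin (L + 1) → Fin m) :
    (swapSeq i j).foldl applyT σ = σ ∘ Equiv.swap ⟨i, hij.trans hj⟩ ⟨j, hj⟩ := by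
  rw [swapSeq]
  split_ifs with hji
  · simp [applyT, hij.trans hj, hj]
  · have hih : i < (i + j) / 2 := by omega
    have hhj : (i + j) / 2 < j := by omega
    have hh : (i + j) / 2 < L + 1 := by omega
    rw [List.foldl_append, List.foldl_append, foldl_applyT_swapSeq hih hh,
      foldl_applyT_swapSeq hhj hj, foldl_applyT_swapSeq hih hh]
    have hconj := Equiv.swap_mul_swap_mul_swap (x := (⟨j, hj⟩ : Fin (L + 1)))
      (y := ⟨(i + j) / 2, hh⟩) (z := ⟨i, hij.trans hj⟩)
      (by simp [Fin.ext_iff]; omega) (by simp [Fin.ext_iff]; omega)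
    rw [Equiv.swap_comm (⟨(i + j) / 2, hh⟩ : Fin (L + 1)),
      Equiv.swap_comm (⟨j, hj⟩ : Fin (L + 1))] at hconj
    rw [← hconj]
    rfl
termination_by j - i

theorem foldl_applyT_swapSeq0 (i : Fin (L + 1)) (σ : Fin (L + 1) → Fin m) :
    (swapSeq0 i).foldl applyT σ = σ ∘ Equiv.swap 0 i := by
  unfold swapSeq0
  split_ifs with hi
  · simp [show i = 0 from Fin.ext hi]
  · exact foldl_applyT_swapSeq (Nat.pos_of_ne_zero hi) i.isLt σ

theorem gammaPath_eq_cons (lam : Fin (L + 1) → Fin m) (i : Fin (L + 1)) (k kstar : Fin m) :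
    gammaPath lam i k kstar =
      lam :: (List.scanl applyT (update lam 0 kstar) (swapSeq0 i) ++
        (List.scanl applyT (update (update lam 0 kstar ∘ Equiv.swap 0 i) 0 k) (swapSeq0 i) ++
          [update (update lam i k) 0 (lam 0)])) := by
  simp [gammaPath, List.scanl_append, List.scanl_map, List.foldl_map, foldl_applyT_swapSeq0,
    update_swap_update_swap]

theorem injective_update_zero_prod (kstar : Fin m) :
    Injective fun x : (Fin (L + 1) → Fin m) × Fin m => (update x.1 0 kstar, (x.1 0, x.2)) :=
  LeftInverse.injective (g := fun y => (update y.1 0 y.2.1, y.2.2)) fun x => by simp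

theorem injective_update_swap_update_prod (kstar : Fin m) (i : Fin (L + 1)) :
    Injective fun x : (Fin (L + 1) → Fin m) × Fin m =>
      (update (update x.1 0 kstar ∘ Equiv.swap 0 i) 0 x.2, (x.1 0, x.1 i)) := by
  refine LeftInverse.injective
    (g := fun y => (update (update y.1 0 y.2.2 ∘ Equiv.swap 0 i) 0 y.2.1, y.1 0)) fun x => ?_
  refine Prod.ext (funext fun j => ?_) (by simp)
  by_cases hj0 : j = 0
  · simp [hj0]
  by_cases hji : j = i
  · subst hji
    simp [hj0]
  · simp [hj0, hji, Equiv.swap_apply_of_ne_of_ne]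

theorem injective_update_update_prod (i : Fin (L + 1)) :
    Injective fun x : (Fin (L + 1) → Fin m) × Fin m =>
      (update (update x.1 i x.2) 0 (x.1 0), (x.1 i, x.2)) := by
  refine LeftInverse.injective (g := fun y => (update y.1 i y.2.1, y.2.2)) fun x => ?_
  refine Prod.ext (funext fun j => ?_) rfl
  by_cases hji : j = i
  · simp [hji]
  by_cases hj0 : j = 0
  · subst hj0
    simp [hji]
  · simp [hj0, hji]

theorem card_filter_mem_gammaPath_index_le (kstar : Fin m) (i : Fin (L + 1))
    (τ : Fin (L + 1) → Fin m) :
    #{x : (Fin (L + 1) → Fin m) × Fin m | τ ∈ gammaPath x.1 i x.2 kstar} ≤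
      (2 * (swapSeq0 i).length + 4) * m ^ 2 := by
  set S := swapSeq0 i
  have hZ : Fintype.card (Fin m × Fin m) = m ^ 2 := by simp [sq]
  have hstart := card_filter_eq_le_of_injective Prod.fst
    (fun x : (Fin (L + 1) → Fin m) × Fin m => (x.1 0, x.2))
    (fun x y h => by simp_all [Prod.ext_iff]) τ
  have hfirst := card_filter_mem_scanl_le applyT_injective S _ _
    (injective_update_zero_prod kstar) τ
  have hsecond := card_filter_mem_scanl_le applyT_injective S _ _
    (injective_update_swap_update_prod kstar i) τ
  have hend := card_filter_eq_le_of_injective _ _ (injective_update_update_prod i) τ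
  rw [hZ] at hstart hfirst hsecond hend
  calc
    _ ≤ #{x : (Fin (L + 1) → Fin m) × Fin m | x.1 = τ ∨
          τ ∈ List.scanl applyT (update x.1 0 kstar) S ∨
          τ ∈ List.scanl applyT (update (update x.1 0 kstar ∘ Equiv.swap 0 i) 0 x.2) S ∨
          update (update x.1 i x.2) 0 (x.1 0) = τ} := by
      refine card_le_card (monotone_filter_right _ fun x _ hx => ?_)
      simp only [gammaPath_eq_cons, List.mem_cons, List.mem_append] at hx
      grind
    _ ≤ _ := by
      rw [filter_or, filter_or, filter_or]
      grw [card_union_le, card_union_le, card_union_le]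
      linarith

theorem card_filter_mem_gammaPath_le (kstar : Fin m) (τ : Fin (L + 1) → Fin m) :
    #{x : (Fin (L + 1) → Fin m) × Fin (L + 1) × Fin m | τ ∈ gammaPath x.1 x.2.1 x.2.2 kstar} ≤
      (L + 1) * (2 * 3 ^ Nat.clog 2 (L + 1) + 4) * m ^ 2 := by
  rw [card_filter_prod_prod_eq_sum (fun lam (i : Fin (L + 1)) k => τ ∈ gammaPath lam i k kstar)]
  calc _ ≤ ∑ _i : Fin (L + 1), (2 * 3 ^ Nat.clog 2 (L + 1) + 4) * m ^ 2 := by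
        refine sum_le_sum fun i _ => (card_filter_mem_gammaPath_index_le kstar i τ).trans ?_
        have hlen := (length_swapSeq0_le i).trans
          (Nat.pow_le_pow_right three_pos (Nat.clog_mono_right 2 i.isLt.le))
        gcongr
    _ = _ := by simp [mul_assoc]

end GammaPath

/-- there is an absolute constant `C > 0` such that for all `L ≥ 1`, `m ≥ 1`,
`k* ∈ {1,…,m}` and every ordered pair `(τ, τ̃)` of states, the number of triples `(λ, i, k)`
such that `(τ, τ̃)` occurs as a consecutive pair of distinct states on the path `γ_{λ,i,k}`
is at most `C m² (L+1)^{1 + log₂ 3}`. -/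
theorem stmt_6 : ∃ C : ℝ, 0 < C ∧
    ∀ (L m : ℕ), 1 ≤ L → 1 ≤ m → ∀ kstar : Fin m,
    ∀ τ τ' : Fin (L + 1) → Fin m,
      ((Finset.univ.filter
          (fun x : (Fin (L + 1) → Fin m) × Fin (L + 1) × Fin m =>
            τ ≠ τ' ∧ (τ, τ') ∈ (gammaPath x.1 (x.2.1 : ℕ) x.2.2 kstar).zip
              (gammaPath x.1 (x.2.1 : ℕ) x.2.2 kstar).tail)).card : ℝ) ≤
        C * (m : ℝ) ^ 2 * ((L : ℝ) + 1) ^ (1 + Real.logb 2 3) := by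
  refine ⟨10, by norm_num, fun L m _ _ kstar τ τ' => ?_⟩
  have hpow := three_pow_clog_two_le (Nat.le_add_left 1 L)
  have hlog : 0 ≤ Real.logb 2 3 := Real.logb_nonneg one_lt_two (by norm_num)
  have hone : (1 : ℝ) ≤ ((L : ℝ) + 1) ^ Real.logb 2 3 :=
    Real.one_le_rpow (by linarith [L.cast_nonneg (α := ℝ)]) hlog
  push_cast at hpow
  calc _ ≤ (#{x : (Fin (L + 1) → Fin m) × Fin (L + 1) × Fin m |
          τ ∈ gammaPath x.1 x.2.1 x.2.2 kstar} : ℝ) := by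
        exact_mod_cast card_le_card (monotone_filter_right _
          fun x _ (h : τ ≠ τ' ∧ _) => (List.of_mem_zip h.2).1)
    _ ≤ ((L + 1) * (2 * 3 ^ Nat.clog 2 (L + 1) + 4) * m ^ 2 : ℕ) := by
        exact_mod_cast card_filter_mem_gammaPath_le kstar τ
    _ ≤ ((L : ℝ) + 1) * (2 * (3 * ((L : ℝ) + 1) ^ Real.logb 2 3) + 4) * m ^ 2 := by
        push_cast
        gcongr
    _ ≤ 10 * (m : ℝ) ^ 2 * (((L : ℝ) + 1) * ((L : ℝ) + 1) ^ Real.logb 2 3) := by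
        have : (0 : ℝ) ≤ ((L : ℝ) + 1) * m ^ 2 := by positivity
        nlinarith
    _ = _ := by rw [Real.rpow_one_add' (by positivity) (by linarith)]
end

section
/- Let L ≥ 1 be an integer, let p be as in the explicit parallel-tempering construction, and define the bottleneck ratio B = min over k ∈ {1,…,m} of Π_{i=1}^{L} min{1, p(i−1,k)/p(i,k)}. Then B > 1/(L+1)⁷. -/
/-!
Factoring `γ^((i+1)²)` out of `N(i,k)` leaves a weight `w(i,k) = γ^(1-(k-i-1)²) + b(i)`: a peak of
height `γ` at `i = k-1`, at most `1` elsewhere, on top of a background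
`b(i) = Σ_r γ^(-(r-i)(r-i-1))` that moves by at most `γ⁻¹` (or `1` at the last step) when `i`
moves by one. The normalizers `Σ_h N(i,h) = γ^((i+1)²) Z(i)` satisfy `Z(i) ≥ γ` and
`Z(i-1) ≤ Z(i) + L + 2`. Splitting `p(i-1,k)/p(i,k) = w(i-1,k)/w(i,k) · Z(i)/Z(i-1)`, the weight
factors telescope up to the peak, leaving `w(0,k)/w(k-1,k) ≥ 1/(γ+L+1)` times factors
`≥ 1 - γ⁻¹`, and the normalizer factors are `≥ 1 - (L+2)/γ`. For `γ = (L+1)³` Bernoulli's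
inequality bounds both products of `L` factors below by `1/2`, so `B ≥ 1/(8γ) > 1/(L+1)⁷`.
-/

/-- The unnormalized weight `N(i,k) = γ^(2(i+1)k − k² + 1) + Σ_{r=0}^{L} γ^((2r+1)(i+1) − r² − r)`
with `γ = (L+1)³`, of the explicit parallel-tempering construction. -/
noncomputable def NPT (L i k : ℕ) : ℝ :=
  (((L : ℝ) + 1) ^ 3) ^ (2 * ((i : ℤ) + 1) * (k : ℤ) - (k : ℤ) ^ 2 + 1) +
    ∑ r ∈ Finset.range (L + 1),
      (((L : ℝ) + 1) ^ 3) ^ ((2 * (r : ℤ) + 1) * ((i : ℤ) + 1) - (r : ℤ) ^ 2 - (r : ℤ))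

/-- `p(i,k) = N(i,k) / Σ_{h=1}^{m} N(i,h)` with `m = L+1`: the probability vector of the
explicit parallel-tempering construction. -/
noncomputable def pPT (L i k : ℕ) : ℝ := NPT L i k / ∑ h ∈ Finset.Icc 1 (L + 1), NPT L i h

open Finset

lemma min_one_mul_min_one_le {x y : ℝ} (hx : 0 ≤ x) (hy : 0 ≤ y) :
    min 1 x * min 1 y ≤ min 1 (x * y) :=
  le_min (mul_le_one₀ (min_le_left _ _) (le_min zero_le_one hy) (min_le_left _ _))
    (mul_le_mul (min_le_right _ _) (min_le_right _ _) (le_min zero_le_one hy) hx)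

lemma one_sub_div_le_min_one_div {a b c e : ℝ} (hc : 0 < c) (hcb : c ≤ b) (he : 0 ≤ e)
    (hab : b ≤ a + e) : 1 - e / c ≤ min 1 (a / b) := by
  have hb : 0 < b := hc.trans_le hcb
  refine le_min (sub_le_self _ (div_nonneg he hc.le)) ?_
  calc 1 - e / c ≤ 1 - e / b := by gcongr
    _ = (b - e) / b := by field_simp
    _ ≤ a / b := by gcongr; linarith

lemma prod_Ioc_div_pred {u : ℕ → ℝ} (hu : ∀ i, u i ≠ 0) (n : ℕ) :
    ∏ i ∈ Ioc 0 n, u (i - 1) / u i = u 0 / u n := by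
  induction n with
  | zero => simp [div_self (hu 0)]
  | succ n ih =>
    rw [prod_Ioc_succ_top n.zero_le, ih, Nat.add_sub_cancel]
    field_simp [hu n, hu (n + 1)]

lemma le_prod_min_one_div {u : ℕ → ℝ} {c : ℝ} {K N : ℕ} (hu : ∀ i, 0 < u i) (hc : 0 ≤ c)
    (hKN : K ≤ N) (hup : ∀ i ∈ Ioc 0 K, c ≤ min 1 (u i / u (i - 1)))
    (hdown : ∀ i ∈ Ioc K N, c ≤ min 1 (u (i - 1) / u i)) :
    u 0 / u K * c ^ N ≤ ∏ i ∈ Icc 1 N, min 1 (u (i - 1) / u i) := by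
  rw [show Icc 1 N = Ioc 0 N from Icc_add_one_left_eq_Ioc 0 N,
    ← prod_Ioc_consecutive _ K.zero_le hKN]
  have hrise : ∀ i ∈ Ioc 0 K, u (i - 1) / u i * c ≤ min 1 (u (i - 1) / u i) := by
    intro i hi
    have hpos : 0 < u (i - 1) / u i := div_pos (hu _) (hu _)
    calc u (i - 1) / u i * c ≤ u (i - 1) / u i * min 1 (u i / u (i - 1)) := by
          gcongr; exact hup i hi
      _ = min 1 (u (i - 1) / u i) := by
          rw [mul_min_of_nonneg _ _ hpos.le, mul_one,
            div_mul_div_cancel₀ (hu i).ne', div_self (hu _).ne', min_comm]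
  calc u 0 / u K * c ^ N
      = (∏ i ∈ Ioc 0 K, u (i - 1) / u i * c) * ∏ _i ∈ Ioc K N, c := by
        rw [prod_mul_distrib, prod_Ioc_div_pred (fun i => (hu i).ne'), prod_const, prod_const,
          Nat.card_Ioc, Nat.card_Ioc, mul_assoc, ← pow_add, Nat.sub_zero, Nat.add_sub_cancel' hKN]
    _ ≤ _ := by
        gcongr ?_ * ?_
        · exact prod_nonneg fun i _ => le_min zero_le_one (div_pos (hu _) (hu _)).le
        · exact prod_le_prod (fun i _ => mul_nonneg (div_pos (hu _) (hu _)).le hc) hrise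
        · exact prod_le_prod (fun _ _ => hc) hdown

lemma sum_range_shift {M : Type*} [AddCommMonoid M] (f : ℤ → M) (n j : ℕ) :
    ∑ r ∈ range n, f (r - j) + f (-(j + 1)) =
      ∑ r ∈ range n, f (r - (j + 1)) + f (n - (j + 1)) := by
  have h := (sum_range_succ' (fun r : ℕ => f (r - (j + 1))) n).symm.trans
    (sum_range_succ (fun r : ℕ => f (r - (j + 1))) n)
  convert h using 3 <;> push_cast <;> ring_nf

lemma half_le_one_sub_pow {x : ℝ} {n : ℕ} (hnx : n * x ≤ 1 / 2) :
    1 / 2 ≤ (1 - x) ^ n := by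
  rcases n.eq_zero_or_pos with rfl | hn
  · norm_num
  have h := one_add_mul_le_pow (a := -x) (by nlinarith [(Nat.one_le_cast.mpr hn : (1:ℝ) ≤ n)]) n
  rw [← sub_eq_add_neg] at h
  linarith

namespace ParallelTempering

-- `N(i,k) = γ^((i+1)²) (peak γ i k + background γ L i)`, because `2(i+1)k - k² + 1` equals
-- `(i+1)² + 1 - (k-i-1)²` and `(2r+1)(i+1) - r² - r` equals `(i+1)² - (r-i)(r-i-1)`.
noncomputable def peak (γ : ℝ) (i k : ℕ) : ℝ := γ ^ (1 - ((k : ℤ) - i - 1) ^ 2)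

noncomputable def background (γ : ℝ) (L i : ℕ) : ℝ :=
  ∑ r ∈ range (L + 1), γ ^ (-(((r : ℤ) - i) * ((r : ℤ) - i - 1)))

noncomputable def gauss (γ : ℝ) (L i : ℕ) : ℝ := ∑ r ∈ range (L + 1), γ ^ (-((r : ℤ) - i) ^ 2)

noncomputable def weight (γ : ℝ) (L i k : ℕ) : ℝ := peak γ i k + background γ L i

noncomputable def normalizer (γ : ℝ) (L i : ℕ) : ℝ :=
  γ * gauss γ L i + (L + 1) * background γ L i

variable {γ : ℝ} {L : ℕ}

lemma zpow_le_inv (hγ : 1 ≤ γ) {m : ℤ} (hm : m ≤ -1) : γ ^ m ≤ γ⁻¹ := by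
  simpa using zpow_le_zpow_right₀ hγ hm

lemma peak_pos (hγ : 0 < γ) (i k : ℕ) : 0 < peak γ i k := zpow_pos hγ _

lemma peak_le (hγ : 1 ≤ γ) (i k : ℕ) : peak γ i k ≤ γ := by
  simpa [peak] using zpow_le_zpow_right₀ hγ (sub_le_self 1 (sq_nonneg ((k : ℤ) - i - 1)))

lemma background_nonneg (hγ : 0 < γ) (i : ℕ) : 0 ≤ background γ L i :=
  sum_nonneg fun _ _ => (zpow_pos hγ _).le

lemma one_le_background (hγ : 0 < γ) {i : ℕ} (hi : i ≤ L) : 1 ≤ background γ L i := by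
  have h := single_le_sum (fun r _ => (zpow_pos hγ _).le) (mem_range.mpr (Nat.lt_succ_of_le hi))
    (f := fun r : ℕ => γ ^ (-(((r : ℤ) - i) * ((r : ℤ) - i - 1))))
  simpa [background] using h

lemma background_le (hγ : 1 ≤ γ) (i : ℕ) : background γ L i ≤ L + 1 := by
  have h : ∀ r ∈ range (L + 1), γ ^ (-(((r : ℤ) - i) * ((r : ℤ) - i - 1))) ≤ 1 := fun r _ =>
    zpow_le_one_of_nonpos₀ hγ (by nlinarith [sq_nonneg ((r : ℤ) - i - 1)])
  simpa [background] using sum_le_sum h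

lemma one_le_gauss (hγ : 0 < γ) {i : ℕ} (hi : i ≤ L) : 1 ≤ gauss γ L i := by
  have h := single_le_sum (fun r _ => (zpow_pos hγ _).le) (mem_range.mpr (Nat.lt_succ_of_le hi))
    (f := fun r : ℕ => γ ^ (-((r : ℤ) - i) ^ 2))
  simpa [gauss] using h

lemma weight_pos (hγ : 0 < γ) (i k : ℕ) : 0 < weight γ L i k :=
  add_pos_of_pos_of_nonneg (peak_pos hγ i k) (background_nonneg hγ i)

lemma one_le_weight (hγ : 0 < γ) {i : ℕ} (hi : i ≤ L) (k : ℕ) : 1 ≤ weight γ L i k :=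
  (one_le_background hγ hi).trans (le_add_of_nonneg_left (peak_pos hγ i k).le)

lemma weight_le (hγ : 1 ≤ γ) (i k : ℕ) : weight γ L i k ≤ γ + (L + 1) :=
  add_le_add (peak_le hγ i k) (background_le hγ i)

lemma normalizer_pos (hγ : 0 < γ) (i : ℕ) : 0 < normalizer γ L i := by
  have : 0 < gauss γ L i := sum_pos (fun _ _ => zpow_pos hγ _) nonempty_range_add_one
  unfold normalizer
  have := background_nonneg (L := L) hγ i
  positivity

lemma le_normalizer (hγ : 0 < γ) {i : ℕ} (hi : i ≤ L) : γ ≤ normalizer γ L i := by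
  have := one_le_gauss hγ hi
  have := background_nonneg (L := L) hγ i
  unfold normalizer
  nlinarith

lemma background_le_background_succ_add (hγ : 0 < γ) (j : ℕ) :
    background γ L j ≤
      background γ L (j + 1) + γ ^ (-(((L : ℤ) - j) * ((L : ℤ) - j - 1))) := by
  have h := sum_range_shift (fun d : ℤ => γ ^ (-(d * (d - 1)))) (L + 1) j
  have h0 : 0 < γ ^ (-((-((j : ℤ) + 1)) * (-((j : ℤ) + 1) - 1))) := zpow_pos hγ _
  simp only [background, Nat.cast_add, Nat.cast_one] at h ⊢
  rw [show (L : ℤ) + 1 - (j + 1) = L - j by ring] at h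
  linarith

lemma background_succ_le_background_add (hγ : 0 < γ) (j : ℕ) :
    background γ L (j + 1) ≤ background γ L j + γ ^ (-(((j : ℤ) + 1) * ((j : ℤ) + 2))) := by
  have h := sum_range_shift (fun d : ℤ => γ ^ (-(d * (d - 1)))) (L + 1) j
  have h0 : 0 < γ ^ (-(((L : ℤ) + 1 - (j + 1)) * ((L : ℤ) + 1 - (j + 1) - 1))) :=
    zpow_pos hγ _
  simp only [background, Nat.cast_add, Nat.cast_one] at h ⊢
  rw [show -(-((j : ℤ) + 1) * (-(j + 1) - 1)) = -((j + 1) * (j + 2)) by ring] at h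
  linarith

lemma gauss_le_gauss_succ_add (hγ : 0 < γ) (j : ℕ) :
    gauss γ L j ≤ gauss γ L (j + 1) + γ ^ (-((L : ℤ) - j) ^ 2) := by
  have h := sum_range_shift (fun d : ℤ => γ ^ (-d ^ 2)) (L + 1) j
  have h0 : 0 < γ ^ (-(-((j : ℤ) + 1)) ^ 2) := zpow_pos hγ _
  simp only [gauss, Nat.cast_add, Nat.cast_one] at h ⊢
  rw [show (L : ℤ) + 1 - (j + 1) = L - j by ring] at h
  linarith

lemma weight_le_weight_succ_add (hγ : 2 ≤ γ) {j k : ℕ} (hjk : j + 2 ≤ k) (hkL : k ≤ L + 1) :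
    weight γ L j k ≤ weight γ L (j + 1) k + γ⁻¹ := by
  have hb := background_le_background_succ_add (L := L) (by linarith) j
  have hinv : 0 < γ⁻¹ := by positivity
  unfold weight
  rcases (by omega : j + 2 ≤ L ∨ (L = j + 1 ∧ k = j + 2)) with hjL | ⟨rfl, rfl⟩
  · have hpeak : peak γ j k ≤ peak γ (j + 1) k :=
      zpow_le_zpow_right₀ (by linarith) (by push_cast; nlinarith)
    have htail : γ ^ (-(((L : ℤ) - j) * ((L : ℤ) - j - 1))) ≤ γ⁻¹ :=
      zpow_le_inv (by linarith) (by nlinarith)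
    linarith
  · -- at the last step the peak grows from `1` to `γ` while the background drops by at most `1`
    norm_num [peak] at hb ⊢
    linarith

lemma weight_succ_le_weight_add (hγ : 1 ≤ γ) {j k : ℕ} (hkj : k ≤ j + 1) :
    weight γ L (j + 1) k ≤ weight γ L j k + γ⁻¹ := by
  have hb := background_succ_le_background_add (L := L) (by linarith) j
  have hpeak : peak γ (j + 1) k ≤ peak γ j k :=
    zpow_le_zpow_right₀ hγ (by push_cast; nlinarith)
  have htail : γ ^ (-(((j : ℤ) + 1) * ((j : ℤ) + 2))) ≤ γ⁻¹ :=
    zpow_le_inv hγ (by nlinarith)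
  unfold weight
  linarith

lemma normalizer_le_normalizer_succ_add (hγ : 1 ≤ γ) {j : ℕ} (hj : j < L) :
    normalizer γ L j ≤ normalizer γ L (j + 1) + (L + 2) := by
  have hγ0 : 0 < γ := by linarith
  have hLj : (1 : ℤ) ≤ L - j := by omega
  have hg : γ * gauss γ L j ≤ γ * gauss γ L (j + 1) + 1 := by
    have h := gauss_le_gauss_succ_add (L := L) hγ0 j
    have htail : γ ^ (-((L : ℤ) - j) ^ 2) ≤ γ⁻¹ := zpow_le_inv hγ (by nlinarith)
    calc γ * gauss γ L j ≤ γ * (gauss γ L (j + 1) + γ⁻¹) := by gcongr; linarith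
      _ = γ * gauss γ L (j + 1) + 1 := by field_simp
  have hb : background γ L j ≤ background γ L (j + 1) + 1 := by
    have h := background_le_background_succ_add (L := L) hγ0 j
    have htail : γ ^ (-(((L : ℤ) - j) * ((L : ℤ) - j - 1))) ≤ 1 := by
      apply zpow_le_one_of_nonpos₀ hγ
      nlinarith
    linarith
  have hb' : ((L : ℝ) + 1) * background γ L j ≤ (L + 1) * (background γ L (j + 1) + 1) := by
    gcongr
  unfold normalizer
  linarith

lemma le_prod_min_one_weight_div (hγ : 2 ≤ γ) {k : ℕ} (hk : k ≤ L + 1) :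
    weight γ L 0 k / weight γ L (k - 1) k * (1 - γ⁻¹) ^ L ≤
      ∏ i ∈ Icc 1 L, min 1 (weight γ L (i - 1) k / weight γ L i k) := by
  have hγ0 : 0 < γ := by linarith
  refine le_prod_min_one_div (fun i => weight_pos hγ0 i k)
    (sub_nonneg.mpr (inv_le_one_of_one_le₀ (by linarith))) (by omega) ?_ ?_
  · intro i hi
    obtain ⟨j, rfl⟩ : ∃ j, i = j + 1 := ⟨i - 1, by grind⟩
    rw [Nat.add_sub_cancel, ← div_one γ⁻¹]
    exact one_sub_div_le_min_one_div one_pos (one_le_weight hγ0 (by grind) k)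
      (inv_nonneg.mpr hγ0.le) (weight_le_weight_succ_add hγ (by grind) hk)
  · intro i hi
    obtain ⟨j, rfl⟩ : ∃ j, i = j + 1 := ⟨i - 1, by grind⟩
    rw [Nat.add_sub_cancel, ← div_one γ⁻¹]
    exact one_sub_div_le_min_one_div one_pos (one_le_weight hγ0 (by grind) k)
      (inv_nonneg.mpr hγ0.le) (weight_succ_le_weight_add (by linarith) (by grind))

lemma le_prod_min_one_normalizer_div (hγ : (L : ℝ) + 2 ≤ γ) :
    (1 - (L + 2) / γ) ^ L ≤ ∏ i ∈ Icc 1 L, min 1 (normalizer γ L i / normalizer γ L (i - 1)) := by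
  have hγ0 : 0 < γ := by linarith [L.cast_nonneg (α := ℝ)]
  calc (1 - (L + 2) / γ) ^ L = ∏ _i ∈ Icc 1 L, (1 - (L + 2) / γ) := by
        rw [prod_const, Nat.card_Icc, Nat.add_sub_cancel]
    _ ≤ _ := by
      refine prod_le_prod (fun _ _ => sub_nonneg.mpr ((div_le_one hγ0).mpr hγ)) fun i hi => ?_
      obtain ⟨j, rfl⟩ : ∃ j, i = j + 1 := ⟨i - 1, by grind⟩
      rw [Nat.add_sub_cancel]
      exact one_sub_div_le_min_one_div hγ0 (le_normalizer hγ0 (by grind)) (by positivity)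
        (normalizer_le_normalizer_succ_add (by linarith) (by grind))

lemma sum_peak (hγ : γ ≠ 0) (i : ℕ) :
    ∑ h ∈ Icc 1 (L + 1), peak γ i h = γ * gauss γ L i := by
  rw [← Ico_add_one_right_eq_Icc, sum_Ico_eq_sum_range, Nat.add_sub_cancel, gauss, mul_sum]
  refine sum_congr rfl fun r _ => ?_
  rw [peak, ← zpow_one_add₀ hγ]
  congr 1
  push_cast
  ring

lemma NPT_eq (i k : ℕ) :
    NPT L i k = (((L : ℝ) + 1) ^ 3) ^ (((i : ℤ) + 1) ^ 2) * weight (((L : ℝ) + 1) ^ 3) L i k := by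
  have hγ : ((L : ℝ) + 1) ^ 3 ≠ 0 := by positivity
  rw [NPT, weight, peak, background, mul_add ((((L : ℝ) + 1) ^ 3) ^ (((i : ℤ) + 1) ^ 2)),
    mul_sum, ← zpow_add₀ hγ]
  congr 1
  · congr 1; ring
  · refine sum_congr rfl fun r _ => ?_
    rw [← zpow_add₀ hγ]
    congr 1; ring

lemma sum_NPT_eq (i : ℕ) :
    ∑ h ∈ Icc 1 (L + 1), NPT L i h =
      (((L : ℝ) + 1) ^ 3) ^ (((i : ℤ) + 1) ^ 2) * normalizer (((L : ℝ) + 1) ^ 3) L i := by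
  simp only [NPT_eq, ← mul_sum, weight, sum_add_distrib, sum_const, Nat.card_Icc,
    sum_peak (show ((L : ℝ) + 1) ^ 3 ≠ 0 by positivity), normalizer, nsmul_eq_mul]
  push_cast
  ring

lemma pPT_eq (i k : ℕ) :
    pPT L i k = weight (((L : ℝ) + 1) ^ 3) L i k / normalizer (((L : ℝ) + 1) ^ 3) L i := by
  rw [pPT, NPT_eq, sum_NPT_eq, mul_div_mul_left _ _ (zpow_ne_zero _ (by positivity))]

lemma pPT_div_pPT (i j k : ℕ) :
    pPT L i k / pPT L j k =
      weight (((L : ℝ) + 1) ^ 3) L i k / weight (((L : ℝ) + 1) ^ 3) L j k *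
        (normalizer (((L : ℝ) + 1) ^ 3) L j / normalizer (((L : ℝ) + 1) ^ 3) L i) := by
  have hγ : (0 : ℝ) < ((L : ℝ) + 1) ^ 3 := by positivity
  have := (weight_pos (L := L) hγ j k).ne'
  have := (normalizer_pos (L := L) hγ i).ne'
  rw [pPT_eq, pPT_eq]
  field_simp

lemma one_div_pow_seven_lt (hL : 1 ≤ L) :
    1 / ((L : ℝ) + 1) ^ 7 <
      1 / (((L : ℝ) + 1) ^ 3 + (L + 1)) * (1 - (((L : ℝ) + 1) ^ 3)⁻¹) ^ L *
        (1 - (L + 2) / ((L : ℝ) + 1) ^ 3) ^ L := by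
  have hx2 : (2 : ℝ) ≤ L + 1 := by
    have : (1 : ℝ) ≤ L := by exact_mod_cast hL
    linarith
  generalize hx : (L : ℝ) + 1 = x at hx2 ⊢
  have hLx : (L : ℝ) = x - 1 := by linarith
  rw [hLx]
  have hγ : 0 < x ^ 3 := by positivity
  have hx3 : 2 * x ^ 2 ≤ x ^ 3 := by nlinarith [sq_nonneg x]
  have h1 : 1 / 2 ≤ (1 - (x ^ 3)⁻¹) ^ L := by
    refine half_le_one_sub_pow ?_
    rw [← div_eq_mul_inv, div_le_iff₀ hγ, hLx]
    nlinarith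
  have h2 : 1 / 2 ≤ (1 - (x - 1 + 2) / x ^ 3) ^ L := by
    refine half_le_one_sub_pow ?_
    rw [← mul_div_assoc, div_le_iff₀ hγ, hLx]
    nlinarith
  have h3 : 1 / (2 * x ^ 3) ≤ 1 / (x ^ 3 + x) :=
    one_div_le_one_div_of_le (by positivity) (by nlinarith)
  calc 1 / x ^ 7 = 1 / (x ^ 4 * x ^ 3) := by ring
    _ < 1 / (8 * x ^ 3) := by gcongr; nlinarith
    _ = 1 / (2 * x ^ 3) * (1 / 2) * (1 / 2) := by ring
    _ ≤ _ := by gcongr ?_ * ?_ * ?_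

lemma le_prod_min_one_pPT_div (hL : 1 ≤ L) {k : ℕ} (hk : k ≤ L + 1) :
    1 / (((L : ℝ) + 1) ^ 3 + (L + 1)) * (1 - (((L : ℝ) + 1) ^ 3)⁻¹) ^ L *
        (1 - (L + 2) / ((L : ℝ) + 1) ^ 3) ^ L ≤
      ∏ i ∈ Icc 1 L, min 1 (pPT L (i - 1) k / pPT L i k) := by
  have hLγ : (L : ℝ) + 2 ≤ ((L : ℝ) + 1) ^ 3 := by
    have : (1 : ℝ) ≤ L := by exact_mod_cast hL
    nlinarith [pow_le_pow_left₀ zero_le_one this 2, pow_nonneg (L.cast_nonneg (α := ℝ)) 3]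
  set γ : ℝ := ((L : ℝ) + 1) ^ 3
  have hγ : 0 < γ := by positivity
  have hw : ∀ i, 0 ≤ min 1 (weight γ L (i - 1) k / weight γ L i k) := fun i =>
    le_min zero_le_one (div_pos (weight_pos hγ _ _) (weight_pos hγ _ _)).le
  have hZ : 0 ≤ 1 - (L + 2) / γ := sub_nonneg.mpr ((div_le_one hγ).mpr hLγ)
  calc _ ≤ weight γ L 0 k / weight γ L (k - 1) k * (1 - γ⁻¹) ^ L * (1 - (L + 2) / γ) ^ L := by
        have := one_le_weight (L := L) hγ L.zero_le k
        have := weight_le (γ := γ) (L := L) (by linarith) (k - 1) k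
        have := weight_pos (L := L) hγ (k - 1) k
        have : 0 ≤ 1 - γ⁻¹ := sub_nonneg.mpr (inv_le_one_of_one_le₀ (by linarith))
        gcongr
    _ ≤ (∏ i ∈ Icc 1 L, min 1 (weight γ L (i - 1) k / weight γ L i k)) *
          ∏ i ∈ Icc 1 L, min 1 (normalizer γ L i / normalizer γ L (i - 1)) := by
        gcongr
        · exact prod_nonneg fun i _ => hw i
        · exact le_prod_min_one_weight_div (by linarith) hk
        · exact le_prod_min_one_normalizer_div hLγ
    _ ≤ ∏ i ∈ Icc 1 L, min 1 (pPT L (i - 1) k / pPT L i k) := by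
        rw [← prod_mul_distrib]
        refine prod_le_prod (fun i _ => mul_nonneg (hw i) ?_) fun i _ => ?_
        · exact le_min zero_le_one (div_pos (normalizer_pos hγ _) (normalizer_pos hγ _)).le
        rw [pPT_div_pPT]
        exact min_one_mul_min_one_le (div_pos (weight_pos hγ _ _) (weight_pos hγ _ _)).le
          (div_pos (normalizer_pos hγ _) (normalizer_pos hγ _)).le

end ParallelTempering

open ParallelTempering in
/-- the bottleneck ratio
`B = min_{k ∈ {1,…,m}} Π_{i=1}^{L} min{1, p(i−1,k)/p(i,k)}` of the explicit construction
satisfies `B > 1/(L+1)⁷`. -/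
theorem stmt_12 (L : ℕ) (hL : 1 ≤ L) :
    (Finset.Icc 1 (L + 1)).inf' (by rw [Finset.nonempty_Icc]; omega)
      (fun k => ∏ i ∈ Finset.Icc 1 L, min 1 (pPT L (i - 1) k / pPT L i k)) >
      1 / ((L : ℝ) + 1) ^ 7 := by
  rw [gt_iff_lt, lt_inf'_iff]
  intro k hk
  exact (one_div_pow_seven_lt hL).trans_le (le_prod_min_one_pPT_div hL (mem_Icc.mp hk).2)
end

section
/- Let L ≥ 4 be an integer and let p, w, S and W be as in the explicit parallel-tempering construction and its permutation identification. Then Σ_{σ ∈ S} w(σ) / W > 1/(2e). -/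
open scoped Classical

/-- The weight `w(σ) = Π_{i=0}^{L} p(i, σ(i)+1)` of a permutation `σ` of `{0,…,L}`
(states of the projected chain are identified with permutations). -/
noncomputable def wPT (L : ℕ) (σ : Equiv.Perm (Fin (L + 1))) : ℝ :=
  ∏ i : Fin (L + 1), pPT L (i : ℕ) ((σ i : ℕ) + 1)

/-- `W = Σ_σ w(σ)`, the total weight over all permutations of `{0,…,L}`. -/
noncomputable def WPT (L : ℕ) : ℝ := ∑ σ : Equiv.Perm (Fin (L + 1)), wPT L σ

/-- `σ' = s_j(σ)` for some adjacent swap `s_j`, `j ∈ {1,…,L}`: `σ'` is obtained from `σ` by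
exchanging the values at two adjacent positions `a` and `a+1`. -/
def adjStep {L : ℕ} (σ σ' : Equiv.Perm (Fin (L + 1))) : Prop :=
  ∃ a b : Fin (L + 1), (b : ℕ) = (a : ℕ) + 1 ∧ σ' = σ * Equiv.swap a b

/-- The set `S` of permutations reachable from the identity by adjacent swaps so that every
intermediate permutation has at most `⌊log₂ L⌋ − 1` non-fixed points. -/
def SPT (L : ℕ) : Set (Equiv.Perm (Fin (L + 1))) :=
  {σ | ∃ (T : ℕ) (f : ℕ → Equiv.Perm (Fin (L + 1))), f 0 = 1 ∧ f T = σ ∧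
    (∀ t < T, adjStep (f t) (f (t + 1))) ∧
    ∀ t ≤ T, ((Finset.univ.filter fun i => f t i ≠ i).card : ℤ) ≤ ⌊Real.logb 2 (L : ℝ)⌋ - 1}

/-!
Already the identity permutation carries weight at least `1/e`. The exponent of `γ` in
`N(i,k)` is maximal, equal to `(i+1)² + 1`, exactly at `k = i+1`; every other exponent is at
most `(i+1)²`. Since `γ = (L+1)³` beats the `O(L²)` competing terms, `p(i,i+1) ≥ (L+1)/(L+2)`,
so `w(id) ≥ ((L+1)/(L+2))^(L+1) ≥ 1/e`. The identity lies in `S`, and `W ≤ 1` because `W` is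
part of the expansion of `Π_i Σ_k p(i,k) = 1`. Hence the ratio is at least `1/e > 1/(2e)`.
-/

open Finset

theorem sum_perm_prod_le_one {α : Type*} [Fintype α] [DecidableEq α] {p : α → α → ℝ}
    (hp0 : ∀ i k, 0 ≤ p i k) (hp1 : ∀ i, ∑ k, p i k = 1) :
    ∑ σ : Equiv.Perm α, ∏ i, p i (σ i) ≤ 1 := by
  let coe : Equiv.Perm α ↪ (α → α) := ⟨(⇑), DFunLike.coe_injective⟩
  calc ∑ σ : Equiv.Perm α, ∏ i, p i (σ i) = ∑ f ∈ univ.map coe, ∏ i, p i (f i) := by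
        rw [sum_map]; rfl
    _ ≤ ∑ f : α → α, ∏ i, p i (f i) :=
        sum_le_univ_sum_of_nonneg fun f => prod_nonneg fun i _ => hp0 i (f i)
    _ = 1 := by rw [← Fintype.prod_sum, prod_eq_one fun i _ => hp1 i]

theorem le_div_sum_of_forall_ne_le {ι : Type*} {s : Finset ι} {f : ι → ℝ} {i : ι} {c d : ℝ}
    (hi : i ∈ s) (hd : 0 < d) (hdf : d ≤ f i) (hc : 0 ≤ c) (hf0 : ∀ j ∈ s, 0 ≤ f j)
    (hfc : ∀ j ∈ s, j ≠ i → f j ≤ c) :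
    d / (d + (#s - 1) * c) ≤ f i / ∑ j ∈ s, f j := by
  have hcard : (1 : ℝ) ≤ #s := by exact_mod_cast card_pos.mpr ⟨i, hi⟩
  have hrest : ∑ j ∈ s.erase i, f j ≤ (#s - 1) * c := by
    calc ∑ j ∈ s.erase i, f j ≤ #(s.erase i) • c :=
          sum_le_card_nsmul _ _ _ fun j hj => hfc j (mem_of_mem_erase hj) (ne_of_mem_erase hj)
      _ = (#s - 1) * c := by
          rw [card_erase_of_mem hi, nsmul_eq_mul, Nat.cast_pred (card_pos.mpr ⟨i, hi⟩)]
  have hrest0 : 0 ≤ ∑ j ∈ s.erase i, f j := sum_nonneg fun j hj => hf0 j (mem_of_mem_erase hj)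
  rw [← add_sum_erase s f hi, div_le_div_iff₀ (by positivity) (by linarith)]
  nlinarith [mul_nonneg (sub_nonneg.mpr hdf) (mul_nonneg (sub_nonneg.mpr hcard) hc)]

theorem Real.exp_neg_one_le_succ_div_pow (n : ℕ) :
    Real.exp (-1) ≤ (((n : ℝ) + 1) / (n + 2)) ^ (n + 1) := by
  have h := one_add_inv_pow_le_exp (n := n + 1)
  have hbase : ((n : ℝ) + 1) / (n + 2) = (1 + ((n + 1 : ℕ) : ℝ)⁻¹)⁻¹ := by
    push_cast
    field_simp
    ring
  rw [hbase, inv_pow, Real.exp_neg]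
  exact inv_anti₀ (by positivity) h

theorem two_mul_mul_sub_sq_add_one_le {a b : ℤ} (h : b ≠ a) : 2 * a * b - b ^ 2 + 1 ≤ a ^ 2 := by
  have : 1 ≤ (b - a) ^ 2 := by
    rcases lt_or_gt_of_ne h with h | h <;> nlinarith
  nlinarith

theorem two_mul_add_one_mul_sub_sq_sub_le (a r : ℤ) : (2 * r + 1) * a - r ^ 2 - r ≤ a ^ 2 := by
  have : 0 ≤ (a - r) * (a - r - 1) := by
    rcases le_or_gt (a - r) 0 with h | h <;> nlinarith
  nlinarith

section Construction

variable (L : ℕ)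

theorem one_le_gamma : (1 : ℝ) ≤ ((L : ℝ) + 1) ^ 3 :=
  one_le_pow₀ (by linarith [(L.cast_nonneg : (0 : ℝ) ≤ L)])

theorem NPT_tail_nonneg (i : ℕ) : 0 ≤ ∑ r ∈ range (L + 1),
    (((L : ℝ) + 1) ^ 3) ^ ((2 * (r : ℤ) + 1) * ((i : ℤ) + 1) - (r : ℤ) ^ 2 - (r : ℤ)) :=
  sum_nonneg fun _ _ => (zpow_pos (by positivity) _).le

theorem NPT_pos (i k : ℕ) : 0 < NPT L i k :=
  add_pos_of_pos_of_nonneg (zpow_pos (by positivity) _) (NPT_tail_nonneg L i)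

theorem pPT_pos (i k : ℕ) : 0 < pPT L i k :=
  div_pos (NPT_pos L i k) (sum_pos (fun h _ => NPT_pos L i h) ⟨1, by simp⟩)

theorem sum_pPT (i : ℕ) : ∑ k : Fin (L + 1), pPT L i (k + 1) = 1 := by
  have hIcc : ∑ h ∈ Icc 1 (L + 1), NPT L i h = ∑ k : Fin (L + 1), NPT L i (k + 1) := by
    rw [Fin.sum_univ_eq_sum_range (fun k => NPT L i (k + 1)), ← Finset.Ico_add_one_right_eq_Icc,
      sum_Ico_eq_sum_range]
    simp only [Nat.add_sub_cancel, add_comm 1]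
  simp only [pPT, ← sum_div, hIcc]
  exact div_self (sum_pos (fun k _ => NPT_pos L i _) univ_nonempty).ne'

theorem gamma_mul_le_NPT_diag (i : ℕ) :
    ((L : ℝ) + 1) ^ 3 * (((L : ℝ) + 1) ^ 3) ^ (((i : ℤ) + 1) ^ 2) ≤ NPT L i (i + 1) := by
  have hexp : 2 * ((i : ℤ) + 1) * ((i + 1 : ℕ) : ℤ) - ((i + 1 : ℕ) : ℤ) ^ 2 + 1
      = ((i : ℤ) + 1) ^ 2 + 1 := by push_cast; ring
  rw [NPT, hexp, zpow_add_one₀ (by positivity), mul_comm]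
  linarith [NPT_tail_nonneg L i]

theorem NPT_le_of_ne (i h : ℕ) (hne : h ≠ i + 1) :
    NPT L i h ≤ ((L : ℝ) + 2) * (((L : ℝ) + 1) ^ 3) ^ (((i : ℤ) + 1) ^ 2) := by
  have hmain : (((L : ℝ) + 1) ^ 3) ^ (2 * ((i : ℤ) + 1) * (h : ℤ) - (h : ℤ) ^ 2 + 1)
      ≤ (((L : ℝ) + 1) ^ 3) ^ (((i : ℤ) + 1) ^ 2) :=
    zpow_le_zpow_right₀ (one_le_gamma L) (two_mul_mul_sub_sq_add_one_le (by omega))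
  have htail := sum_le_card_nsmul (range (L + 1)) _ _ fun r _ =>
    zpow_le_zpow_right₀ (one_le_gamma L) (two_mul_add_one_mul_sub_sq_sub_le ((i : ℤ) + 1) r)
  rw [card_range, nsmul_eq_mul] at htail
  push_cast at htail
  rw [NPT]
  linarith

theorem succ_div_succ_succ_le_pPT_diag {i : ℕ} (hi : i ≤ L) :
    ((L : ℝ) + 1) / (L + 2) ≤ pPT L i (i + 1) := by
  set E := (((L : ℝ) + 1) ^ 3) ^ (((i : ℤ) + 1) ^ 2)
  have hE : 0 < E := zpow_pos (by positivity) _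
  have hdom := le_div_sum_of_forall_ne_le (s := Icc 1 (L + 1)) (by simp; omega)
    (by positivity) (gamma_mul_le_NPT_diag L i) (by positivity)
    (fun h _ => (NPT_pos L i h).le) (fun h _ hne => NPT_le_of_ne L i h hne)
  rw [Nat.card_Icc, Nat.add_sub_cancel, Nat.cast_add_one, add_sub_cancel_right] at hdom
  refine le_trans ?_ hdom
  have hγ : (L : ℝ) * (L + 2) * (L + 1) ≤ ((L : ℝ) + 1) ^ 3 := by nlinarith
  rw [div_le_div_iff₀ (by positivity) (by positivity)]
  nlinarith [mul_le_mul_of_nonneg_right hγ hE.le]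

theorem exp_neg_one_le_wPT_one : Real.exp (-1) ≤ wPT L 1 := by
  calc Real.exp (-1) ≤ (((L : ℝ) + 1) / (L + 2)) ^ (L + 1) :=
        Real.exp_neg_one_le_succ_div_pow L
    _ = ∏ _i : Fin (L + 1), ((L : ℝ) + 1) / (L + 2) := by
        rw [prod_const, card_univ, Fintype.card_fin]
    _ ≤ wPT L 1 := prod_le_prod (fun _ _ => by positivity)
        fun i _ => succ_div_succ_succ_le_pPT_diag L (Nat.lt_succ_iff.mp i.isLt)

theorem WPT_le_one : WPT L ≤ 1 := by
  unfold WPT wPT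
  exact sum_perm_prod_le_one (p := fun i k : Fin (L + 1) => pPT L i (k + 1))
    (fun _ _ => (pPT_pos L _ _).le) fun i => sum_pPT L i

theorem one_mem_SPT (hL : 2 ≤ L) : (1 : Equiv.Perm (Fin (L + 1))) ∈ SPT L := by
  refine ⟨0, fun _ => 1, rfl, rfl, fun t ht => absurd ht t.not_lt_zero, fun _ _ => ?_⟩
  have hlog : ((1 : ℤ) : ℝ) ≤ Real.logb 2 L := by
    rw [Int.cast_one, Real.le_logb_iff_rpow_le (by norm_num) (by positivity), Real.rpow_one]
    exact_mod_cast hL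
  have := Int.le_floor.mpr hlog
  simp only [Equiv.Perm.coe_one, id_eq, ne_eq, not_true_eq_false, filter_false, card_empty,
    Nat.cast_zero]
  omega

end Construction

/-- `Σ_{σ ∈ S} w(σ) / W > 1/(2e)`. -/
theorem stmt_13 (L : ℕ) (hL : 4 ≤ L) :
    (∑ σ ∈ Finset.univ.filter (fun σ => σ ∈ SPT L), wPT L σ) / WPT L >
      1 / (2 * Real.exp 1) := by
  have hw : ∀ σ, 0 < wPT L σ := fun σ => prod_pos fun i _ => pPT_pos L _ _
  have hS : Real.exp (-1) ≤ ∑ σ ∈ univ.filter (fun σ => σ ∈ SPT L), wPT L σ :=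
    (exp_neg_one_le_wPT_one L).trans <| single_le_sum (fun σ _ => (hw σ).le)
      (by simpa using one_mem_SPT L (by omega))
  have hW : 0 < WPT L := sum_pos (fun σ _ => hw σ) univ_nonempty
  calc 1 / (2 * Real.exp 1) < Real.exp (-1) := by
        rw [Real.exp_neg, ← one_div]
        exact one_div_lt_one_div_of_lt (Real.exp_pos 1) (by linarith [Real.exp_pos 1])
    _ ≤ ∑ σ ∈ univ.filter (fun σ => σ ∈ SPT L), wPT L σ := hS
    _ ≤ _ := le_div_self ((Real.exp_pos _).le.trans hS) hW (WPT_le_one L)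
end
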